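/- Let v₁, v₂, v₃ ∈ ℝ² be distinct, non-collinear, and ordered counterclockwise, i.e. (v₂ − v₁) × (v₃ − v₂) > 0 where a × b = a₁b₂ − a₂b₁. Let ξ ∈ ℝ² be the circumcenter, i.e. ‖v₁ − ξ‖ = ‖v₂ − ξ‖ = ‖v₃ − ξ‖, and let Δ be the convex hull of {v₁, v₂, v₃}. For each cyclic pair (i,j) ∈ {(1,2), (2,3), (3,1)} set v_{ij} = (v_i + v_j)/2, τ_{ij} = J(v_j − v_i) where J(a₁,a₂) = (−a₂, a₁), and ξ_{ij} = ⟨v_{ij} − ξ, τ_{ij}⟩. Then: if ξ ∈ Δ, then ξ_{ij} ≤ 0 for all three cyclic pairs; if ξ ∉ Δ, then ξ_{ij} > 0 holds for exactly one cyclic pair, namely a pair for which ‖v_{ij} − ξ‖ equals the distance from ξ to Δ. -/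

import Mathlib

/-!
For a counterclockwise triangle, `⟪(vᵢ + vⱼ)/2 - ξ, J(vⱼ - vᵢ)⟫ = -(vⱼ - vᵢ) × (ξ - vᵢ)`, so the
sign of `ξᵢⱼ` says on which side of the line `vᵢvⱼ` the point `ξ` lies. Since the triangle is the
intersection of the three inner half-planes, this gives the first claim, and an edge with
`ξᵢⱼ > 0` whenever `ξ ∉ Δ`.

For the circumcenter, `2 ξᵢⱼ ((vⱼ - vᵢ) × (vₖ - vᵢ)) = -‖vⱼ - vᵢ‖² ⟪vᵢ - vₖ, vⱼ - vₖ⟫`, so `ξᵢⱼ > 0`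
exactly when the angle at the opposite vertex `vₖ` is obtuse, and at most one angle is obtuse.
Finally `ξ` lies on the perpendicular bisector of `vᵢvⱼ`, so `vᵢⱼ - ξ` is a positive multiple of the
inward normal `τᵢⱼ` while `Δ` lies beyond the edge line: `vᵢⱼ` is the point of `Δ` nearest to `ξ`.
-/

open scoped RealInnerProductSpace
noncomputable section

/-- Scalar cross product in the plane: `a × b = a₁b₂ − a₂b₁`. -/
def cross2 (a b : EuclideanSpace ℝ (Fin 2)) : ℝ :=
  a 0 * b 1 - a 1 * b 0

/-- Counterclockwise rotation by π/2: `J(a₁,a₂) = (−a₂, a₁)`. -/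
def Jrot (a : EuclideanSpace ℝ (Fin 2)) : EuclideanSpace ℝ (Fin 2) :=
  (WithLp.equiv 2 (Fin 2 → ℝ)).symm ![-(a 1), a 0]

open Set

local notation "ℝ²" => EuclideanSpace ℝ (Fin 2)

lemma inner_eq_coords (x y : ℝ²) : ⟪x, y⟫ = x 0 * y 0 + x 1 * y 1 := by
  simp [PiLp.inner_apply, Fin.sum_univ_two, mul_comm]

lemma norm_sq_eq_coords (x : ℝ²) : ‖x‖ ^ 2 = x 0 ^ 2 + x 1 ^ 2 := by
  rw [← real_inner_self_eq_norm_sq, inner_eq_coords]; ring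

lemma inner_Jrot (x u : ℝ²) : ⟪x, Jrot u⟫ = cross2 u x := by
  rw [inner_eq_coords, cross2]
  simp only [Jrot, WithLp.equiv_symm_apply, Matrix.cons_val_zero, Matrix.cons_val_one,
    Matrix.cons_val_fin_one]
  ring

lemma cross2_sub_cyclic (a b c : ℝ²) : cross2 (c - b) (a - b) = cross2 (b - a) (c - a) := by
  simp only [cross2, PiLp.sub_apply]; ring

lemma cross2_self (u : ℝ²) : cross2 u u = 0 := by
  simp only [cross2]; ring

lemma inner_midpoint_sub_Jrot (a b ξ : ℝ²) :
    ⟪(2 : ℝ)⁻¹ • (a + b) - ξ, Jrot (b - a)⟫ = -cross2 (b - a) (ξ - a) := by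
  rw [inner_Jrot]
  simp only [cross2, PiLp.sub_apply, PiLp.add_apply, PiLp.smul_apply, smul_eq_mul]
  ring

lemma inner_mul_inner_add_inner_Jrot_mul_inner_Jrot (x y u : ℝ²) :
    ⟪x, u⟫ * ⟪y, u⟫ + ⟪x, Jrot u⟫ * ⟪y, Jrot u⟫ = ‖u‖ ^ 2 * ⟪x, y⟫ := by
  rw [inner_Jrot, inner_Jrot]
  simp only [inner_eq_coords, norm_sq_eq_coords, cross2]
  ring

lemma inner_midpoint_sub_Jrot_mul_cross2 {a b c ξ : ℝ²} (hab : ‖a - ξ‖ = ‖b - ξ‖)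
    (hac : ‖a - ξ‖ = ‖c - ξ‖) :
    2 * ⟪(2 : ℝ)⁻¹ • (a + b) - ξ, Jrot (b - a)⟫ * cross2 (b - a) (c - a) =
      -(‖b - a‖ ^ 2 * ⟪a - c, b - c⟫) := by
  have hab2 := congrArg (· ^ 2) hab
  have hac2 := congrArg (· ^ 2) hac
  simp only [norm_sq_eq_coords, PiLp.sub_apply] at hab2 hac2 ⊢
  rw [inner_midpoint_sub_Jrot, inner_eq_coords]
  simp only [cross2, PiLp.sub_apply]
  linear_combination ((b 0 - a 0) * (c 0 - a 0) + (b 1 - a 1) * (c 1 - a 1)) * hab2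
    - ((b 0 - a 0) ^ 2 + (b 1 - a 1) ^ 2) * hac2

section InnerProductSpace
variable {F : Type*} [NormedAddCommGroup F] [InnerProductSpace ℝ F]

lemma inner_midpoint_sub_eq_zero_of_norm_eq {a b ξ : F} (h : ‖a - ξ‖ = ‖b - ξ‖) :
    ⟪(2 : ℝ)⁻¹ • (a + b) - ξ, b - a⟫ = 0 := by
  have h' := (real_inner_add_sub_eq_zero_iff (b - ξ) (a - ξ)).2 h.symm
  rw [show (2 : ℝ)⁻¹ • (a + b) - ξ = (2 : ℝ)⁻¹ • ((b - ξ) + (a - ξ)) by module,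
    show b - a = (b - ξ) - (a - ξ) by abel, real_inner_smul_left, h', mul_zero]

lemma inner_sub_sub_add_inner_sub_sub (p q r : F) :
    ⟪p - r, q - r⟫ + ⟪q - p, r - p⟫ = ‖p - r‖ ^ 2 := by
  rw [← real_inner_self_eq_norm_sq, show q - r = (q - p) + (p - r) by abel,
    show r - p = -(p - r) by abel, inner_add_right, inner_neg_right, real_inner_comm (q - p)]
  ring

lemma infDist_eq_norm_sub_of_forall_inner_nonneg {S : Set F} {m ξ : F} (hm : m ∈ S)
    (h : ∀ z ∈ S, 0 ≤ ⟪z - m, m - ξ⟫) : Metric.infDist ξ S = ‖m - ξ‖ := by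
  refine le_antisymm ?_ ((Metric.le_infDist ⟨m, hm⟩).2 fun z hz => ?_)
  · simpa [dist_eq_norm, norm_sub_rev] using Metric.infDist_le_dist_of_mem (x := ξ) hm
  · have hsq : ‖m - ξ‖ ^ 2 ≤ ‖z - ξ‖ ^ 2 := by
      rw [show z - ξ = (z - m) + (m - ξ) by abel, norm_add_sq_real]
      nlinarith [h z hz, sq_nonneg ‖z - m‖]
    rw [dist_comm, dist_eq_norm]
    exact (pow_le_pow_iff_left₀ (norm_nonneg _) (norm_nonneg _) two_ne_zero).1 hsq
end InnerProductSpace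

lemma cross2_sub_nonneg_of_mem_convexHull {s : Set ℝ²} {u a z : ℝ²}
    (hs : ∀ y ∈ s, 0 ≤ cross2 u (y - a)) (hz : z ∈ convexHull ℝ s) : 0 ≤ cross2 u (z - a) := by
  have hlin : IsLinearMap ℝ (cross2 u) :=
    ⟨fun x y => by simp only [cross2, PiLp.add_apply]; ring,
      fun c x => by simp only [cross2, PiLp.smul_apply, smul_eq_mul]; ring⟩
  have hsub : ∀ y, cross2 u (y - a) = cross2 u y - cross2 u a := fun y => by
    simp only [cross2, PiLp.sub_apply]; ring
  simp only [hsub, sub_nonneg] at hs ⊢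
  exact convexHull_min hs (convex_halfSpace_ge hlin _) hz

lemma fin_three_eq_or (i j : Fin 3) : j = i ∨ j = i + 1 ∨ j = i + 2 := by
  revert i j; decide

lemma fin_three_add_one_add_two (i : Fin 3) : i + 1 + 2 = i := by
  fin_cases i <;> rfl

lemma fin_three_add_two_add_one (i : Fin 3) : i + 2 + 1 = i := by
  fin_cases i <;> rfl

section Triangle
variable {v : Fin 3 → ℝ²}

lemma cross2_edge_pos (hv : 0 < cross2 (v 1 - v 0) (v 2 - v 0)) (i : Fin 3) :
    0 < cross2 (v (i + 1) - v i) (v (i + 2) - v i) := by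
  fin_cases i <;> simp only [Fin.reduceFinMk, Fin.reduceAdd, Fin.isValue]
  · exact hv
  · rwa [cross2_sub_cyclic]
  · rwa [cross2_sub_cyclic, cross2_sub_cyclic]

lemma cross2_edge_nonneg_of_mem_convexHull (hv : 0 < cross2 (v 1 - v 0) (v 2 - v 0)) (i : Fin 3)
    {z : ℝ²} (hz : z ∈ convexHull ℝ (range v)) : 0 ≤ cross2 (v (i + 1) - v i) (z - v i) := by
  refine cross2_sub_nonneg_of_mem_convexHull ?_ hz
  rintro _ ⟨j, rfl⟩
  obtain rfl | rfl | rfl := fin_three_eq_or i j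
  · simp [cross2]
  · rw [cross2_self]
  · exact (cross2_edge_pos hv i).le

lemma mem_convexHull_of_cross2_edge_nonneg (hv : 0 < cross2 (v 1 - v 0) (v 2 - v 0)) {z : ℝ²}
    (h : ∀ i, 0 ≤ cross2 (v (i + 1) - v i) (z - v i)) : z ∈ convexHull ℝ (range v) := by
  -- the edge value of `z` opposite each vertex is its unnormalised barycentric coordinate
  set w : Fin 3 → ℝ := fun k => cross2 (v (k + 1 + 1) - v (k + 1)) (z - v (k + 1))
  have hw : ∑ k, w k = cross2 (v 1 - v 0) (v 2 - v 0) := by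
    simp only [w, cross2, PiLp.sub_apply, Fin.sum_univ_three, zero_add, Fin.reduceAdd, Fin.isValue]
    ring
  have hcm : Finset.univ.centerMass w v = z := by
    rw [Finset.centerMass, hw, inv_smul_eq_iff₀ hv.ne']
    ext j
    fin_cases j <;>
      simp only [w, cross2, PiLp.sub_apply, PiLp.add_apply, PiLp.smul_apply, smul_eq_mul,
        Fin.sum_univ_three, zero_add, Fin.reduceAdd, Fin.isValue, Fin.zero_eta, Fin.mk_one] <;>
      ring
  exact hcm ▸ Finset.univ.centerMass_mem_convexHull (fun k _ => h (k + 1)) (hw ▸ hv)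
    fun k _ => mem_range_self k

lemma norm_midpoint_sub_eq_infDist_convexHull (hv : 0 < cross2 (v 1 - v 0) (v 2 - v 0))
    {ξ : ℝ²} (i : Fin 3) (hξ : ‖v i - ξ‖ = ‖v (i + 1) - ξ‖)
    (hpos : 0 < ⟪(2 : ℝ)⁻¹ • (v i + v (i + 1)) - ξ, Jrot (v (i + 1) - v i)⟫) :
    ‖(2 : ℝ)⁻¹ • (v i + v (i + 1)) - ξ‖ = Metric.infDist ξ (convexHull ℝ (range v)) := by
  set u := v (i + 1) - v i
  set m := (2 : ℝ)⁻¹ • (v i + v (i + 1))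
  have hm : m ∈ convexHull ℝ (range v) := by
    simpa only [m, smul_add] using convex_convexHull ℝ (range v)
      (subset_convexHull ℝ _ (mem_range_self i)) (subset_convexHull ℝ _ (mem_range_self (i + 1)))
      (by norm_num : (0 : ℝ) ≤ 2⁻¹) (by norm_num : (0 : ℝ) ≤ 2⁻¹) (by norm_num)
  have hu : 0 < ‖u‖ ^ 2 := by
    have hD : 0 < cross2 u (v (i + 2) - v i) := cross2_edge_pos hv i
    have : u ≠ 0 := by
      rintro hu0
      simp [hu0, cross2] at hD
    positivity
  refine (infDist_eq_norm_sub_of_forall_inner_nonneg hm fun z hz => ?_).symm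
  have hside : 0 ≤ ⟪z - m, Jrot u⟫ := by
    have : cross2 u (z - m) = cross2 u (z - v i) := by
      simp only [cross2, m, u, PiLp.sub_apply, PiLp.add_apply, PiLp.smul_apply, smul_eq_mul]
      ring
    rw [inner_Jrot, this]
    exact cross2_edge_nonneg_of_mem_convexHull hv i hz
  have hlag := inner_mul_inner_add_inner_Jrot_mul_inner_Jrot (z - m) (m - ξ) u
  rw [inner_midpoint_sub_eq_zero_of_norm_eq hξ, mul_zero, zero_add] at hlag
  exact nonneg_of_mul_nonneg_right (hlag ▸ mul_nonneg hside hpos.le) hu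

variable {ξ : ℝ²}

lemma inner_sub_sub_neg_of_inner_midpoint_sub_Jrot_pos (hv : 0 < cross2 (v 1 - v 0) (v 2 - v 0))
    (hcirc : ∀ i j, ‖v i - ξ‖ = ‖v j - ξ‖) {i : Fin 3}
    (hi : 0 < ⟪(2 : ℝ)⁻¹ • (v i + v (i + 1)) - ξ, Jrot (v (i + 1) - v i)⟫) :
    ⟪v i - v (i + 2), v (i + 1) - v (i + 2)⟫ < 0 := by
  have hid := inner_midpoint_sub_Jrot_mul_cross2 (hcirc i (i + 1)) (hcirc i (i + 2))
  have hpos := mul_pos (mul_pos two_pos hi) (cross2_edge_pos hv i)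
  refine neg_of_mul_neg_right (a := ‖v (i + 1) - v i‖ ^ 2) ?_ (by positivity)
  linarith

lemma not_inner_midpoint_sub_Jrot_pos_and_succ (hv : 0 < cross2 (v 1 - v 0) (v 2 - v 0))
    (hcirc : ∀ i j, ‖v i - ξ‖ = ‖v j - ξ‖) (i : Fin 3) :
    ¬(0 < ⟪(2 : ℝ)⁻¹ • (v i + v (i + 1)) - ξ, Jrot (v (i + 1) - v i)⟫ ∧
      0 < ⟪(2 : ℝ)⁻¹ • (v (i + 1) + v (i + 1 + 1)) - ξ, Jrot (v (i + 1 + 1) - v (i + 1))⟫) := by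
  rintro ⟨hi, hsucc⟩
  have obtuse_i := inner_sub_sub_neg_of_inner_midpoint_sub_Jrot_pos hv hcirc hi
  have obtuse_succ := inner_sub_sub_neg_of_inner_midpoint_sub_Jrot_pos hv hcirc hsucc
  rw [fin_three_add_one_add_two, add_assoc, show (1 + 1 : Fin 3) = 2 from rfl] at obtuse_succ
  have := inner_sub_sub_add_inner_sub_sub (v i) (v (i + 1)) (v (i + 2))
  linarith [sq_nonneg ‖v i - v (i + 2)‖]

end Triangle

theorem stmt19_general (v : Fin 3 → EuclideanSpace ℝ (Fin 2))
    (ξ : EuclideanSpace ℝ (Fin 2))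
    (hccw : 0 < cross2 (v 1 - v 0) (v 2 - v 1))
    (hcirc : ∀ i j : Fin 3, ‖v i - ξ‖ = ‖v j - ξ‖) :
    (ξ ∈ convexHull ℝ (Set.range v) →
      ∀ i : Fin 3,
        ⟪(2 : ℝ)⁻¹ • (v i + v (i + 1)) - ξ, Jrot (v (i + 1) - v i)⟫ ≤ 0) ∧
    (ξ ∉ convexHull ℝ (Set.range v) →
      ∃ i : Fin 3,
        (0 < ⟪(2 : ℝ)⁻¹ • (v i + v (i + 1)) - ξ, Jrot (v (i + 1) - v i)⟫ ∧
          ‖(2 : ℝ)⁻¹ • (v i + v (i + 1)) - ξ‖ =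
            Metric.infDist ξ (convexHull ℝ (Set.range v))) ∧
        ∀ j : Fin 3,
          0 < ⟪(2 : ℝ)⁻¹ • (v j + v (j + 1)) - ξ, Jrot (v (j + 1) - v j)⟫ →
            j = i) := by
  have hv : 0 < cross2 (v 1 - v 0) (v 2 - v 0) := by
    have : cross2 (v 1 - v 0) (v 2 - v 1) = cross2 (v 1 - v 0) (v 2 - v 0) := by
      simp only [cross2, PiLp.sub_apply]; ring
    exact this ▸ hccw
  refine ⟨fun hξ i => ?_, fun hξ => ?_⟩
  · rw [inner_midpoint_sub_Jrot, neg_nonpos]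
    exact cross2_edge_nonneg_of_mem_convexHull hv i hξ
  obtain ⟨i, hi⟩ : ∃ i, 0 < ⟪(2 : ℝ)⁻¹ • (v i + v (i + 1)) - ξ, Jrot (v (i + 1) - v i)⟫ := by
    by_contra! h
    refine hξ (mem_convexHull_of_cross2_edge_nonneg hv fun i => ?_)
    simpa only [inner_midpoint_sub_Jrot, neg_nonpos] using h i
  refine ⟨i, ⟨hi, norm_midpoint_sub_eq_infDist_convexHull hv i (hcirc _ _) hi⟩, fun j hj => ?_⟩
  obtain rfl | rfl | rfl := fin_three_eq_or i j
  · rfl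
  · exact absurd ⟨hi, hj⟩ (not_inner_midpoint_sub_Jrot_pos_and_succ hv hcirc i)
  · have h := not_inner_midpoint_sub_Jrot_pos_and_succ hv hcirc (i + 2)
    rw [fin_three_add_two_add_one] at h hj
    exact absurd ⟨hj, hi⟩ h

theorem stmt19 (v : Fin 3 → EuclideanSpace ℝ (Fin 2))
    (ξ : EuclideanSpace ℝ (Fin 2))
    (hdist : Function.Injective v)
    (hnc : cross2 (v 1 - v 0) (v 2 - v 0) ≠ 0)
    (hccw : 0 < cross2 (v 1 - v 0) (v 2 - v 1))
    (hcirc : ∀ i j : Fin 3, ‖v i - ξ‖ = ‖v j - ξ‖) :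
    (ξ ∈ convexHull ℝ (Set.range v) →
      ∀ i : Fin 3,
        ⟪(2 : ℝ)⁻¹ • (v i + v (i + 1)) - ξ, Jrot (v (i + 1) - v i)⟫ ≤ 0) ∧
    (ξ ∉ convexHull ℝ (Set.range v) →
      ∃ i : Fin 3,
        (0 < ⟪(2 : ℝ)⁻¹ • (v i + v (i + 1)) - ξ, Jrot (v (i + 1) - v i)⟫ ∧
          ‖(2 : ℝ)⁻¹ • (v i + v (i + 1)) - ξ‖ =
            Metric.infDist ξ (convexHull ℝ (Set.range v))) ∧
        ∀ j : Fin 3,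
          0 < ⟪(2 : ℝ)⁻¹ • (v j + v (j + 1)) - ξ, Jrot (v (j + 1) - v j)⟫ →
            j = i) :=
  stmt19_general v ξ hccw hcirc
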